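/- Let A ⊂ ℝ² be the closed disk of radius R > 0 centered at the origin, and let γ : [0,∞) → ℝ be a bounded measurable function. Then (1/|A|²)·∫_{A×A} γ(‖s − t‖) ds dt = ∫_0^{2R} γ(h)·f_disk(h,R) dh, where ‖·‖ is the Euclidean norm. Equivalently, if S and T are independent random variables uniformly distributed on A, then E[γ(‖S−T‖)] = ∫_0^{2R} γ(h)·f_disk(h,R) dh. -/

import Mathlib

/-!
Substituting `u = s - t` and integrating out the other variable turns the double integral into
`∫ γ ‖u‖ · |A ∩ (A - u)| du`. The lens `A ∩ (A - u)` is two circular segments of height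
`R - ‖u‖/2`, so its area `2R² arccos (‖u‖/2R) - ‖u‖ √(R² - ‖u‖²/4)` depends only on `‖u‖`.
Polar coordinates then give `2π ∫₀^{2R} r γ(r) |lens(r)| dr`, and dividing by `|A|² = π²R⁴`
produces the density `fdisk`.
-/

open MeasureTheory

/-- Density of the distance between two independent uniform points in a disk
of radius `R`. -/
noncomputable def fdisk (h R : ℝ) : ℝ :=
  (2 * h / R ^ 2) *
    ((2 / Real.pi) * Real.arccos (h / (2 * R))
      - (h / (Real.pi * R)) * Real.sqrt (1 - h ^ 2 / (4 * R ^ 2)))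

open Real Set

theorem setIntegral_setIntegral_comp_sub {G : Type*} [AddCommGroup G] [MeasurableSpace G]
    [MeasurableAdd₂ G] [MeasurableNeg G] (μ : Measure G) [SFinite μ] [μ.IsAddRightInvariant]
    {D : Set G} (hD : MeasurableSet D) (hμD : μ D ≠ ⊤) {g : G → ℝ} (hg : Measurable g)
    {M : ℝ} (hM : ∀ u, |g u| ≤ M) :
    ∫ s in D, ∫ t in D, g (s - t) ∂μ ∂μ = ∫ u, g u * μ.real ((u + ·) ⁻¹' D ∩ D) ∂μ := by
  let shear : G × G → G × G := fun z => (z.1 - z.2, z.2)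
  have hshear : MeasurePreserving shear (μ.prod μ) (μ.prod μ) := measurePreserving_sub_prod μ μ
  let S : Set (G × G) := {w | w.1 + w.2 ∈ D ∧ w.2 ∈ D}
  have hS : MeasurableSet S :=
    (hD.preimage (measurable_fst.add measurable_snd)).inter (hD.preimage measurable_snd)
  let F : G × G → ℝ := S.indicator fun w => g w.1
  have hFm : Measurable F := (hg.comp measurable_fst).indicator hS
  have hF_shear : (D ×ˢ D).indicator (fun z => g (z.1 - z.2)) = F ∘ shear := by
    have hpre : shear ⁻¹' S = D ×ˢ D := by ext; simp [shear, S]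
    rw [← hpre]
    exact funext fun z => indicator_comp_right (g := fun w => g w.1) shear (x := z)
  have hint : IntegrableOn (fun z : G × G => g (z.1 - z.2)) (D ×ˢ D) (μ.prod μ) :=
    Measure.integrableOn_of_bounded (by rw [Measure.prod_prod]; finiteness)
      (hg.comp (measurable_fst.sub measurable_snd)).aestronglyMeasurable
      (ae_of_all _ fun z => hM _)
  have hFint : Integrable F (μ.prod μ) := by
    rwa [← hshear.integrable_comp hFm.aestronglyMeasurable, ← hF_shear,
      integrable_indicator_iff (hD.prod hD)]
  calc ∫ s in D, ∫ t in D, g (s - t) ∂μ ∂μ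
      = ∫ z in D ×ˢ D, g (z.1 - z.2) ∂μ.prod μ := (setIntegral_prod _ hint).symm
    _ = ∫ z, F (shear z) ∂μ.prod μ := by
      rw [← integral_indicator (hD.prod hD), hF_shear]
      rfl
    _ = ∫ w, F w ∂μ.prod μ := by
      rw [← integral_map hshear.measurable.aemeasurable
        (hshear.map_eq ▸ hFm.aestronglyMeasurable), hshear.map_eq]
    _ = ∫ u, ∫ t, F (u, t) ∂μ ∂μ := integral_prod F hFint
    _ = ∫ u, g u * μ.real ((u + ·) ⁻¹' D ∩ D) ∂μ := by
      congr 1 with u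
      rw [mul_comm, ← smul_eq_mul,
        ← integral_indicator_const _ ((hD.preimage (measurable_const_add u)).inter hD)]
      rfl

/-- For `d ≥ 2R` the clamping of `arccos` and `√` makes this `0`, the area of the empty lens. -/
noncomputable def lensArea (R d : ℝ) : ℝ :=
  2 * R ^ 2 * arccos (d / (2 * R)) - d * √(R ^ 2 - (d / 2) ^ 2)

theorem lensArea_eq_zero_of_le {R d : ℝ} (hR : 0 < R) (hd : 2 * R ≤ d) : lensArea R d = 0 := by
  rw [lensArea, arccos_eq_zero.2 ((one_le_div (by positivity)).2 hd),
    sqrt_eq_zero'.2 (by nlinarith)]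
  ring

theorem hasDerivAt_segment_primitive {R x : ℝ} (hR : 0 < R) (hx : x ∈ Ioo (-R) R) :
    HasDerivAt (fun x => x * √(R ^ 2 - x ^ 2) - R ^ 2 * arccos (x / R))
      (2 * √(R ^ 2 - x ^ 2)) x := by
  have hpos : 0 < R ^ 2 - x ^ 2 := by nlinarith [hx.1, hx.2]
  have hsq : √(1 - (x / R) ^ 2) = √(R ^ 2 - x ^ 2) / R := by
    rw [← sqrt_sq hR.le, ← sqrt_div' _ (sq_nonneg R), sqrt_sq hR.le]
    congr 1
    field_simp
  have hsqrt :
      HasDerivAt (fun x => √(R ^ 2 - x ^ 2)) (-(2 * x) / (2 * √(R ^ 2 - x ^ 2))) x := by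
    simpa using ((hasDerivAt_pow 2 x).const_sub (R ^ 2)).sqrt hpos.ne'
  have harccos : HasDerivAt (fun x => arccos (x / R)) (-(1 / √(1 - (x / R) ^ 2)) * (1 / R)) x :=
    (hasDerivAt_arccos (by rw [ne_eq, div_eq_iff hR.ne']; linarith [hx.1])
      (by rw [ne_eq, div_eq_one_iff_eq hR.ne']; linarith [hx.2])).comp x
      ((hasDerivAt_id x).div_const R)
  refine (((hasDerivAt_id x).mul hsqrt).sub (harccos.const_mul (R ^ 2))).congr_deriv ?_
  rw [hsq, id]
  field_simp
  rw [sq_sqrt hpos.le]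
  ring

theorem integral_two_mul_sqrt_sq_sub_sq {R c : ℝ} (hR : 0 < R) (hc : -R ≤ c) (hcR : c ≤ R) :
    ∫ x in c..R, 2 * √(R ^ 2 - x ^ 2) = R ^ 2 * arccos (c / R) - c * √(R ^ 2 - c ^ 2) := by
  rw [intervalIntegral.integral_eq_sub_of_hasDerivAt_of_le hcR (by fun_prop)
    (fun x hx => hasDerivAt_segment_primitive hR ⟨hc.trans_lt hx.1, hx.2⟩)
    ((by fun_prop : Continuous fun x => 2 * √(R ^ 2 - x ^ 2)).intervalIntegrable _ _)]
  simp [div_self hR.ne']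

theorem volume_setOf_sq_le (m : ℝ) : volume {y : ℝ | y ^ 2 ≤ m} = ENNReal.ofReal (2 * √m) := by
  rcases le_or_gt 0 m with hm | hm
  · have : {y : ℝ | y ^ 2 ≤ m} = Icc (-√m) √m := by ext y; exact sq_le hm
    rw [this, volume_Icc]
    ring_nf
  · have : {y : ℝ | y ^ 2 ≤ m} = ∅ :=
      eq_empty_of_forall_notMem fun y hy => (hm.trans_le (sq_nonneg y)).not_ge hy
    rw [this, sqrt_eq_zero'.2 hm.le]
    simp

theorem integral_lens_slice {R d : ℝ} (hR : 0 < R) (hd : 0 ≤ d) :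
    ∫ x, 2 * √(min (R ^ 2 - x ^ 2) (R ^ 2 - (x - d) ^ 2)) = lensArea R d := by
  set g : ℝ → ℝ := fun x => 2 * √(min (R ^ 2 - x ^ 2) (R ^ 2 - (x - d) ^ 2))
  have hg_supp : ∀ x ∉ Ioc (d - R) R, g x = 0 := by
    intro x hx
    have : min (R ^ 2 - x ^ 2) (R ^ 2 - (x - d) ^ 2) ≤ 0 := by
      rcases not_and_or.1 hx with h | h
      · exact (min_le_right _ _).trans (by nlinarith [not_lt.1 h])
      · exact (min_le_left _ _).trans (by nlinarith [not_le.1 h])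
    simp [g, sqrt_eq_zero'.2 this]
  rw [← setIntegral_eq_integral_of_forall_compl_eq_zero hg_supp]
  rcases le_or_gt (2 * R) d with hdR | hdR
  · rw [Ioc_eq_empty (by linarith), Measure.restrict_empty, integral_zero_measure,
      lensArea_eq_zero_of_le hR hdR]
  have hg : Continuous g := by fun_prop
  have hright : ∫ x in d / 2..R, g x = ∫ x in d / 2..R, 2 * √(R ^ 2 - x ^ 2) := by
    refine intervalIntegral.integral_congr fun x hx => ?_
    rw [uIcc_of_le (by linarith)] at hx
    simp only [g, min_eq_left (by nlinarith [hx.1] : R ^ 2 - x ^ 2 ≤ R ^ 2 - (x - d) ^ 2)]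
  have hleft : ∫ x in d - R..d / 2, g x = ∫ x in d / 2..R, 2 * √(R ^ 2 - x ^ 2) := by
    have hreflect :
        ∫ x in d - R..d / 2, g x = ∫ x in d - R..d / 2, 2 * √(R ^ 2 - (d - x) ^ 2) := by
      refine intervalIntegral.integral_congr fun x hx => ?_
      rw [uIcc_of_le (by linarith)] at hx
      simp only [g, ← neg_sub d x, neg_sq,
        min_eq_right (by nlinarith [hx.2] : R ^ 2 - (d - x) ^ 2 ≤ R ^ 2 - x ^ 2)]
    rw [hreflect, intervalIntegral.integral_comp_sub_left (fun x => 2 * √(R ^ 2 - x ^ 2)) d,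
      sub_sub_cancel, sub_half]
  rw [← intervalIntegral.integral_of_le (by linarith),
    ← intervalIntegral.integral_add_adjacent_intervals (hg.intervalIntegrable _ (d / 2))
      (hg.intervalIntegrable _ _), hleft, hright,
    integral_two_mul_sqrt_sq_sub_sq hR (by linarith) (by linarith), lensArea, div_div]
  ring

theorem measureReal_lens_prod {R d : ℝ} (hR : 0 < R) (hd : 0 ≤ d) :
    volume.real {p : ℝ × ℝ | p.1 ^ 2 + p.2 ^ 2 ≤ R ^ 2 ∧ (p.1 - d) ^ 2 + p.2 ^ 2 ≤ R ^ 2} =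
      lensArea R d := by
  have hmeas : MeasurableSet
      {p : ℝ × ℝ | p.1 ^ 2 + p.2 ^ 2 ≤ R ^ 2 ∧ (p.1 - d) ^ 2 + p.2 ^ 2 ≤ R ^ 2} := by
    measurability
  have hslice (x : ℝ) :
      {y : ℝ | x ^ 2 + y ^ 2 ≤ R ^ 2 ∧ (x - d) ^ 2 + y ^ 2 ≤ R ^ 2} =
        {y : ℝ | y ^ 2 ≤ min (R ^ 2 - x ^ 2) (R ^ 2 - (x - d) ^ 2)} := by
    ext y
    simp only [mem_ofPred_eq, le_min_iff]
    constructor <;> rintro ⟨h₁, h₂⟩ <;> constructor <;> linarith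
  rw [← integral_lens_slice hR hd, integral_eq_lintegral_of_nonneg_ae
    (ae_of_all _ fun x => by positivity) (by fun_prop), measureReal_def,
    Measure.volume_eq_prod, Measure.prod_apply hmeas]
  simp only [preimage_ofPred_eq, hslice, volume_setOf_sq_le]

theorem EuclideanSpace.mem_closedBall_fin_two_iff {x y : EuclideanSpace ℝ (Fin 2)} {R : ℝ}
    (hR : 0 ≤ R) : x ∈ Metric.closedBall y R ↔ (x 0 - y 0) ^ 2 + (x 1 - y 1) ^ 2 ≤ R ^ 2 := by
  rw [Metric.mem_closedBall, EuclideanSpace.dist_eq, Fin.sum_univ_two, sqrt_le_left hR,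
    Real.dist_eq, Real.dist_eq, sq_abs, sq_abs]

theorem measureReal_closedBall_inter_closedBall {R : ℝ} (hR : 0 < R)
    (u : EuclideanSpace ℝ (Fin 2)) :
    volume.real (Metric.closedBall 0 R ∩ Metric.closedBall u R) = lensArea R ‖u‖ := by
  set v : EuclideanSpace ℝ (Fin 2) := EuclideanSpace.single 0 ‖u‖
  have hv : ‖u‖ = ‖v‖ := by simp [v]
  set f := Submodule.reflection (ℝ ∙ (u - v))ᗮ
  have hrot : f ⁻¹' (Metric.closedBall 0 R ∩ Metric.closedBall v R) =
      Metric.closedBall 0 R ∩ Metric.closedBall u R := by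
    rw [preimage_inter, LinearIsometryEquiv.preimage_closedBall,
      LinearIsometryEquiv.preimage_closedBall, map_zero,
      (LinearIsometryEquiv.symm_apply_eq f).2 (Submodule.reflection_sub hv).symm]
  have hcoord : MeasurePreserving (fun x : EuclideanSpace ℝ (Fin 2) => (x 0, x 1)) :=
    (volume_preserving_finTwoArrow ℝ).comp (PiLp.volume_preserving_ofLp (Fin 2))
  have hflat : (fun x : EuclideanSpace ℝ (Fin 2) => (x 0, x 1)) ⁻¹'
      {p : ℝ × ℝ | p.1 ^ 2 + p.2 ^ 2 ≤ R ^ 2 ∧ (p.1 - ‖u‖) ^ 2 + p.2 ^ 2 ≤ R ^ 2} =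
      Metric.closedBall 0 R ∩ Metric.closedBall v R := by
    ext x
    simp [EuclideanSpace.mem_closedBall_fin_two_iff hR.le, v]
  rw [← hrot, measureReal_def, f.measurePreserving.measure_preimage (by measurability),
    ← hflat, hcoord.measure_preimage (by measurability), ← measureReal_def,
    measureReal_lens_prod hR (norm_nonneg u)]

theorem fdisk_eq_lensArea {R : ℝ} (hR : 0 < R) (h : ℝ) :
    fdisk h R = 2 * π * h * lensArea R h / (π * R ^ 2) ^ 2 := by
  have hsqrt : √(1 - h ^ 2 / (4 * R ^ 2)) = √(R ^ 2 - (h / 2) ^ 2) / R := by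
    rw [← sqrt_sq hR.le, ← sqrt_div' _ (sq_nonneg R), sqrt_sq hR.le]
    congr 1
    field_simp
    ring
  rw [fdisk, hsqrt, lensArea]
  field_simp

/-- For a disk `A` of radius `R` and a bounded measurable `γ`, the normalized double
integral of `γ(‖s - t‖)` reduces to a one-dimensional integral against `fdisk`. -/
theorem stmt_9 (R : ℝ) (hR : 0 < R) (γ : ℝ → ℝ)
    (hmeas : Measurable γ) (hbdd : ∃ M, ∀ h : ℝ, 0 ≤ h → |γ h| ≤ M) :
    ((volume (Metric.closedBall (0 : EuclideanSpace ℝ (Fin 2)) R)).toReal ^ 2)⁻¹ *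
        (∫ s in Metric.closedBall (0 : EuclideanSpace ℝ (Fin 2)) R,
          ∫ t in Metric.closedBall (0 : EuclideanSpace ℝ (Fin 2)) R, γ ‖s - t‖)
      = ∫ h in Set.Icc 0 (2 * R), γ h * fdisk h R := by
  obtain ⟨M, hM⟩ := hbdd
  have hlens (u : EuclideanSpace ℝ (Fin 2)) :
      volume.real ((u + ·) ⁻¹' Metric.closedBall 0 R ∩ Metric.closedBall 0 R) =
        lensArea R ‖u‖ := by
    rw [preimage_add_closedBall, zero_sub, inter_comm, measureReal_closedBall_inter_closedBall hR,
      norm_neg]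
  have hvanish : ∀ r ∈ Ioi 0 \ Ioc 0 (2 * R), r ^ 1 • (γ r * lensArea R r) = 0 := fun r hr => by
    rw [lensArea_eq_zero_of_le hR (not_le.1 fun h => hr.2 ⟨hr.1, h⟩).le, mul_zero, smul_zero]
  have hdisk :
      (volume (Metric.closedBall (0 : EuclideanSpace ℝ (Fin 2)) R)).toReal = π * R ^ 2 := by
    simp [hR.le, pi_nonneg, mul_comm]
  have hunit : volume.real (Metric.ball (0 : EuclideanSpace ℝ (Fin 2)) 1) = π := by
    simp [measureReal_def, pi_nonneg]
  rw [setIntegral_setIntegral_comp_sub volume measurableSet_closedBall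
    measure_closedBall_lt_top.ne (g := fun u => γ ‖u‖) (hmeas.comp measurable_norm)
    fun u => hM _ (norm_nonneg u)]
  simp_rw [hlens]
  rw [integral_fun_norm_addHaar volume fun r => γ r * lensArea R r, finrank_euclideanSpace_fin,
    hunit, hdisk, setIntegral_eq_of_subset_of_forall_sdiff_eq_zero measurableSet_Ioi
      Ioc_subset_Ioi_self hvanish, integral_Icc_eq_integral_Ioc, nsmul_eq_mul, Nat.cast_ofNat,
    smul_eq_mul, ← integral_const_mul, ← integral_const_mul, ← integral_const_mul]
  congr 1 with r
  rw [fdisk_eq_lensArea hR, smul_eq_mul, pow_one]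
  field_simp
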